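/- For any bypass (α,u) in Q, one has W(u) < W(α). -/

import Mathlib

attribute [local instance] Classical.propDecidable

/-- A quiver given by a set of vertices, a set of arrows and source/target maps. -/
structure Quiv where
  V : Type
  A : Type
  s : A → V
  t : A → V

namespace Quiv

section Basic

variable (Q : Quiv)

/-- A (nontrivial) path is a nonempty list of composable arrows, listed in the
order they are traversed. -/
def IsPath (p : List Q.A) : Prop :=
  p ≠ [] ∧ p.Chain' (fun a b => Q.t a = Q.s b)

/-- Source of a nonempty list of arrows. -/
def src (p : List Q.A) : Option Q.V := p.head?.map Q.s

/-- Target of a nonempty list of arrows. -/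
def tgt (p : List Q.A) : Option Q.V := p.getLast?.map Q.t

/-- `Q` has no oriented cycle: no nontrivial path has equal source and target. -/
def NoCycle : Prop := ∀ p, Q.IsPath p → Q.src p ≠ Q.tgt p

/-- `Q` has no multiple arrows: distinct arrows never have both the same source
and the same target. -/
def NoMultipleArrows : Prop :=
  ∀ a b : Q.A, Q.s a = Q.s b → Q.t a = Q.t b → a = b

/-- A bypass `(α, u)`: `u` is a path parallel to the arrow `α` and distinct from it. -/
def IsBypass (α : Q.A) (u : List Q.A) : Prop :=
  Q.IsPath u ∧ Q.src u = some (Q.s α) ∧ Q.tgt u = some (Q.t α) ∧ u ≠ [α]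

/-- `Repl n u v` : `v` is obtained from `u` by replacing `n` of its arrows (at
increasing positions) by bypass paths. -/
inductive Repl : ℕ → List Q.A → List Q.A → Prop
  | nil : Repl 0 [] []
  | keep (a : Q.A) {n : ℕ} {u v : List Q.A} : Repl n u v → Repl n (a :: u) (a :: v)
  | repl {a : Q.A} {p : List Q.A} {n : ℕ} {u v : List Q.A} :
      Q.IsBypass a p → Repl n u v → Repl (n + 1) (a :: u) (p ++ v)

/-- `v` is derived of `u` of order `t`. -/
def DerivedOfOrder (t : ℕ) (u v : List Q.A) : Prop := 1 ≤ t ∧ Q.Repl t u v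

/-- `v` is derived of `u` (of some order `t ≥ 1`). -/
def Derived (u v : List Q.A) : Prop := ∃ t, Q.DerivedOfOrder t u v

/-- `W(α)` : the number of bypasses of the form `(α, u)`. -/
noncomputable def Wa (α : Q.A) : ℕ := Nat.card {u : List Q.A // Q.IsBypass α u}

/-- `W(u)` for a path `u = α_n ⋯ α_1` : the sum of the `W(α_i)`. -/
noncomputable def Wp (u : List Q.A) : ℕ := (u.map Q.Wa).sum

/-- A linear order `<` on the nontrivial paths of `Q` refining the `W`-ordering and
compatible with concatenation, as in Le Meur's Definition 2.5. -/
structure PathOrder where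
  lt : List Q.A → List Q.A → Prop
  irrefl : ∀ p, Q.IsPath p → ¬ lt p p
  trans' : ∀ p q r, lt p q → lt q r → lt p r
  total' : ∀ p q, Q.IsPath p → Q.IsPath q → p ≠ q → lt p q ∨ lt q p
  wlt : ∀ p q, Q.IsPath p → Q.IsPath q → Q.Wp p < Q.Wp q → lt p q
  concat : ∀ u u' v v' : List Q.A, lt v u → lt v' u' →
    Q.IsPath (v ++ v') → Q.IsPath (u ++ u') → lt (v ++ v') (u ++ u')

end Basic

/-- Lexicographic (strict) order on bypasses: `(α,u) < (β,v)` iff `α < β`, or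
`α = β` and `u < v`. -/
def PathOrder.bplt {Q : Quiv} (o : Q.PathOrder) (b c : Q.A × List Q.A) : Prop :=
  o.lt [b.1] [c.1] ∨ (b.1 = c.1 ∧ o.lt b.2 c.2)

/-- Lexicographic non-strict order on bypasses. -/
def PathOrder.bple {Q : Quiv} (o : Q.PathOrder) (b c : Q.A × List Q.A) : Prop :=
  o.bplt b c ∨ b = c

section Linear

variable (Q : Quiv) (k : Type) [Field k]

/-- Concatenation product on the free `k`-module on lists of arrows (the morphism
spaces of the path category `kQ`). -/
noncomputable def mulF (f g : List Q.A →₀ k) : List Q.A →₀ k :=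
  f.sum fun p c => g.sum fun q d => Finsupp.single (p ++ q) (c * d)

/-- Image of the arrow `a` under the transvection `φ_{α,u,τ}`. -/
noncomputable def arrowImg (α : Q.A) (u : List Q.A) (τ : k) (a : Q.A) : List Q.A →₀ k :=
  if a = α then Finsupp.single [a] 1 + τ • Finsupp.single u 1 else Finsupp.single [a] 1

/-- Image of a path under the transvection `φ_{α,u,τ}`. -/
noncomputable def substPoly (α : Q.A) (u : List Q.A) (τ : k) : List Q.A → (List Q.A →₀ k)
  | [] => Finsupp.single [] 1
  | a :: rest => mulF Q k (arrowImg Q k α u τ a) (substPoly α u τ rest)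

/-- The transvection `φ_{α,u,τ}` as a linear endomorphism of `kQ` : it is the
`k`-linear automorphism of `kQ` fixing every vertex, sending `α` to `α + τ u`, and
fixing every other arrow. -/
noncomputable def substMap (α : Q.A) (u : List Q.A) (τ : k) :
    Module.End k (List Q.A →₀ k) :=
  Finsupp.linearCombination k (substPoly Q k α u τ)

/-- `ψ` lies in the group `T` generated by the transvections, i.e. it is a finite
product of transvections. -/
def MemT (ψ : Module.End k (List Q.A →₀ k)) : Prop :=
  ∃ L : List (Q.A × List Q.A × k),
    (∀ x ∈ L, Q.IsBypass x.1 x.2.1) ∧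
    ψ = (L.map fun x => substMap Q k x.1 x.2.1 x.2.2).prod

/-- `r'` is a subexpression of `r`. -/
def Subexpr (r' r : List Q.A →₀ k) : Prop :=
  r'.support ⊆ r.support ∧ ∀ p ∈ r'.support, r' p = r p

/-- A minimal relation of `I` : a nonzero `r ∈ I` such that `0` and `r` are the only
subexpressions of `r` lying in `I`. -/
def IsMinimalRel (I : Submodule k (List Q.A →₀ k)) (r : List Q.A →₀ k) : Prop :=
  r ∈ I ∧ r ≠ 0 ∧ ∀ r', Subexpr Q k r' r → r' ∈ I → r' = 0 ∨ r' = r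

/-- `ReplExp g u v c` : `v` is obtained from the path `u` by replacing some of its
arrows `a` (at increasing positions) by paths `w ∈ supp(g a)`, `w ≠ a`, and `c` is
the product of the corresponding coefficients `w^*(g a)`. -/
inductive ReplExp (g : Q.A → (List Q.A →₀ k)) : List Q.A → List Q.A → k → Prop
  | nil : ReplExp g [] [] 1
  | keep (a : Q.A) {u v : List Q.A} {c : k} :
      ReplExp g u v c → ReplExp g (a :: u) (a :: v) c
  | repl (a : Q.A) {w u v : List Q.A} {c : k} :
      w ∈ (g a).support → w ≠ [a] → ReplExp g u v c →
      ReplExp g (a :: u) (w ++ v) ((g a) w * c)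

/-- The homotopy relation `∼_I` on walks. A walk is a list of pairs `(a, d)` where
`a` is an arrow and `d` is `true` for `a` and `false` for the formal inverse `a⁻¹`;
the relation is the smallest equivalence relation compatible with concatenation,
cancelling `a a⁻¹` and `a⁻¹ a`, and identifying any two paths lying in the support
of a minimal relation of `I`. -/
inductive Homotopic (I : Submodule k (List Q.A →₀ k)) :
    List (Q.A × Bool) → List (Q.A × Bool) → Prop
  | refl (w : List (Q.A × Bool)) : Homotopic I w w
  | symm {w w' : List (Q.A × Bool)} : Homotopic I w w' → Homotopic I w' w
  | trans {w w' w'' : List (Q.A × Bool)} :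
      Homotopic I w w' → Homotopic I w' w'' → Homotopic I w w''
  | cancel (a : Q.A) : Homotopic I [(a, true), (a, false)] []
  | cancel' (a : Q.A) : Homotopic I [(a, false), (a, true)] []
  | rel {r : List Q.A →₀ k} (hr : IsMinimalRel Q k I r) {u v : List Q.A}
      (hu : u ∈ r.support) (hv : v ∈ r.support) :
      Homotopic I (u.map fun a => (a, true)) (v.map fun a => (a, true))
  | congr (w x : List (Q.A × Bool)) {v v' : List (Q.A × Bool)} :
      Homotopic I v v' → Homotopic I (w ++ v ++ x) (w ++ v' ++ x)

/-- `I` is a monomial admissible ideal of `kQ` : every element is a combination of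
paths of length `≥ 2`, membership is detected on supports (monomiality), and `I`
is stable under concatenation with paths on either side. -/
def IsMonomialAdmissible (I : Submodule k (List Q.A →₀ k)) : Prop :=
  (∀ r ∈ I, ∀ p ∈ (r : List Q.A →₀ k).support, Q.IsPath p ∧ 2 ≤ p.length) ∧
  (∀ r : List Q.A →₀ k, (∀ p ∈ r.support, Finsupp.single p (1 : k) ∈ I) → r ∈ I) ∧
  (∀ r ∈ I, ∀ p ∈ (r : List Q.A →₀ k).support, Finsupp.single p (1 : k) ∈ I) ∧
  (∀ p q : List Q.A, Q.IsPath p → Finsupp.single q (1 : k) ∈ I → Q.IsPath (p ++ q) →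
    Finsupp.single (p ++ q) (1 : k) ∈ I) ∧
  (∀ p q : List Q.A, Finsupp.single p (1 : k) ∈ I → Q.IsPath q → Q.IsPath (p ++ q) →
    Finsupp.single (p ++ q) (1 : k) ∈ I)

/-- A `k`-linear automorphism of `kQ` (fixing the vertices) is the transvection
`φ_{α,u,τ}` when its underlying linear map is `substMap α u τ`. -/
def IsTransvectionE (ψ : (List Q.A →₀ k) ≃ₗ[k] (List Q.A →₀ k))
    (α : Q.A) (u : List Q.A) (τ : k) : Prop :=
  (ψ : (List Q.A →₀ k) →ₗ[k] (List Q.A →₀ k)) = substMap Q k α u τ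

/-- The subgroup `T_{<(α,u)}` generated by the transvections `φ_{β,v,τ}` with
`(β,v) < (α,u)`. -/
noncomputable def TltSub (o : Q.PathOrder) (b : Q.A × List Q.A) :
    Subgroup ((List Q.A →₀ k) ≃ₗ[k] (List Q.A →₀ k)) :=
  Subgroup.closure
    {ψ | ∃ β v τ, Q.IsBypass β v ∧ o.bplt (β, v) b ∧ IsTransvectionE Q k ψ β v τ}

/-- The subgroup `T_{≤(α,u)}` generated by the transvections `φ_{β,v,τ}` with
`(β,v) ≤ (α,u)`. -/
noncomputable def TleSub (o : Q.PathOrder) (b : Q.A × List Q.A) :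
    Subgroup ((List Q.A →₀ k) ≃ₗ[k] (List Q.A →₀ k)) :=
  Subgroup.closure
    {ψ | ∃ β v τ, Q.IsBypass β v ∧ o.bple (β, v) b ∧ IsTransvectionE Q k ψ β v τ}

/-- The set `T_{(α,u)} = {φ_{α,u,τ} | τ ∈ k}`. -/
def TsingleSet (b : Q.A × List Q.A) :
    Set ((List Q.A →₀ k) ≃ₗ[k] (List Q.A →₀ k)) :=
  {ψ | ∃ τ : k, IsTransvectionE Q k ψ b.1 b.2 τ}

/-- `m` is the `<`-maximum of the support of `r`. -/
def IsMaxPath (o : Q.PathOrder) (r : List Q.A →₀ k) (m : List Q.A) : Prop :=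
  m ∈ r.support ∧ ∀ p ∈ r.support, p ≠ m → o.lt p m

/-- `B` is the Gröbner basis of the subspace `F` with respect to the path order `o` :
`B` spans `F` and each `r ∈ B` has a leading path `m` (with coefficient `1`, all other
paths of `supp r` being `<`-smaller) whose coefficient in every other element of `B`
vanishes. -/
def IsGB (o : Q.PathOrder) (F : Submodule k (List Q.A →₀ k))
    (B : Set (List Q.A →₀ k)) : Prop :=
  B ⊆ (F : Set (List Q.A →₀ k)) ∧ Submodule.span k B = F ∧
  ∀ r ∈ B, ∃ m, m ∈ (r : List Q.A →₀ k).support ∧ r m = 1 ∧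
    (∀ p ∈ (r : List Q.A →₀ k).support, p ≠ m → o.lt p m) ∧
    ∀ r' ∈ B, r' ≠ r → (r' : List Q.A →₀ k) m = 0

end Linear

/-! For a path `u`, let `S u` be the set of paths parallel to `u` and at least as long.
If `u = a :: rest`, prepending `a` to the paths of `S rest` and appending `rest` to the bypasses
of `a` gives two disjoint families in `S u`: a bypass of `a` cannot start with `a`, since its
remainder would be an oriented cycle at the target of `a`. By induction on `u`, `W(u) < #S u`.
A bypass `u` of `α` has length at least `2` because there are no multiple arrows, so `[α] ∉ S u`
and `S u` consists of bypasses of `α`. -/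

section Counting

variable {Q : Quiv}

lemma isPath_iff {p : List Q.A} :
    Q.IsPath p ↔ p ≠ [] ∧ p.IsChain (fun a b => Q.t a = Q.s b) :=
  Iff.rfl

lemma src_append {p : List Q.A} (q : List Q.A) (hp : p ≠ []) : Q.src (p ++ q) = Q.src p := by
  obtain ⟨a, p, rfl⟩ := List.exists_cons_of_ne_nil hp
  simp [Quiv.src]

lemma tgt_append (p : List Q.A) {q : List Q.A} (hq : q ≠ []) : Q.tgt (p ++ q) = Q.tgt q := by
  obtain ⟨q, b, rfl⟩ := (List.eq_nil_or_concat' q).resolve_left hq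
  simp [Quiv.tgt, ← List.append_assoc]

lemma isPath_append {p q : List Q.A} (hp : p ≠ []) (hq : q ≠ []) :
    Q.IsPath (p ++ q) ↔ Q.IsPath p ∧ Q.IsPath q ∧ Q.tgt p = Q.src q := by
  obtain ⟨p, a, rfl⟩ := (List.eq_nil_or_concat' p).resolve_left hp
  obtain ⟨b, q, rfl⟩ := List.exists_cons_of_ne_nil hq
  simp [isPath_iff, Quiv.src, Quiv.tgt, List.isChain_append]
  tauto

lemma isPath_singleton (a : Q.A) : Q.IsPath [a] := by
  simp [isPath_iff]

lemma isPath_cons {a : Q.A} {rest : List Q.A} (hrest : rest ≠ []) :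
    Q.IsPath (a :: rest) ↔ Q.IsPath rest ∧ some (Q.t a) = Q.src rest := by
  simpa [isPath_singleton, Quiv.tgt] using isPath_append (p := [a]) (List.cons_ne_nil _ _) hrest

lemma tgt_cons (a : Q.A) {rest : List Q.A} (hrest : rest ≠ []) :
    Q.tgt (a :: rest) = Q.tgt rest :=
  tgt_append [a] hrest

lemma IsPath.nodup (hnc : Q.NoCycle) {p : List Q.A} (hp : Q.IsPath p) : p.Nodup := by
  induction p with
  | nil => exact List.nodup_nil
  | cons a rest ih =>
    rcases eq_or_ne rest [] with rfl | hrest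
    · exact List.nodup_singleton a
    refine List.nodup_cons.mpr ⟨fun ha => ?_, ih ((isPath_cons hrest).mp hp).1⟩
    obtain ⟨B, C, rfl⟩ := List.append_of_mem ha
    have hcyc := (isPath_append (p := a :: B) (List.cons_ne_nil _ _) (List.cons_ne_nil _ _)).mp hp
    exact hnc (a :: B) hcyc.1 hcyc.2.2.symm

lemma finite_setOf_isPath [Finite Q.A] (hnc : Q.NoCycle) : {p | Q.IsPath p}.Finite := by
  have := Fintype.ofFinite Q.A
  exact (List.finite_length_le Q.A (Fintype.card Q.A)).subset
    fun p hp => (hp.nodup hnc).length_le_card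

lemma IsBypass.two_le_length (hnm : Q.NoMultipleArrows) {α : Q.A} {u : List Q.A}
    (h : Q.IsBypass α u) : 2 ≤ u.length := by
  obtain ⟨⟨hne, -⟩, hsrc, htgt, hne'⟩ := h
  rcases u with _ | ⟨a, _ | ⟨b, w⟩⟩
  · exact absurd rfl hne
  · exact absurd (by rw [hnm a α (Option.some.inj hsrc) (Option.some.inj htgt)]) hne'
  · simp

lemma not_isBypass_cons_self (hnc : Q.NoCycle) (α : Q.A) (w : List Q.A) :
    ¬ Q.IsBypass α (α :: w) := by
  rintro ⟨hpath, -, htgt, hne⟩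
  have hw : w ≠ [] := by rintro rfl; exact hne rfl
  obtain ⟨hw_path, hw_src⟩ := (isPath_cons hw).mp hpath
  exact hnc w hw_path (by rw [← hw_src, ← htgt, tgt_cons α hw])

def parallelPathsNotShorter (u : List Q.A) : Set (List Q.A) :=
  {p | Q.IsPath p ∧ Q.src p = Q.src u ∧ Q.tgt p = Q.tgt u ∧ u.length ≤ p.length}

lemma finite_parallelPathsNotShorter [Finite Q.A] (hnc : Q.NoCycle) (u : List Q.A) :
    (parallelPathsNotShorter u).Finite :=
  (finite_setOf_isPath hnc).subset fun _ hp => hp.1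

lemma finite_setOf_isBypass [Finite Q.A] (hnc : Q.NoCycle) (α : Q.A) :
    {v | Q.IsBypass α v}.Finite :=
  (finite_setOf_isPath hnc).subset fun _ hv => hv.1

lemma Wa_eq_ncard (α : Q.A) : Q.Wa α = {v | Q.IsBypass α v}.ncard := rfl

lemma Wa_lt_ncard_parallelPathsNotShorter_singleton [Finite Q.A] (hnc : Q.NoCycle) (a : Q.A) :
    Q.Wa a < (parallelPathsNotShorter [a]).ncard := by
  have hsub : insert [a] {v | Q.IsBypass a v} ⊆ parallelPathsNotShorter [a] := by
    rintro p (rfl | ⟨hp, hsrc, htgt, -⟩)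
    · exact ⟨isPath_singleton a, rfl, rfl, le_rfl⟩
    · exact ⟨hp, hsrc, htgt, List.length_pos_iff.mpr hp.1⟩
  calc Q.Wa a < (insert [a] {v | Q.IsBypass a v}).ncard := by
        rw [Set.ncard_insert_of_notMem (fun h => h.2.2.2 rfl) (finite_setOf_isBypass hnc a),
          Wa_eq_ncard]
        exact Nat.lt_succ_self _
    _ ≤ _ := Set.ncard_le_ncard hsub (finite_parallelPathsNotShorter hnc _)

lemma cons_mem_parallelPathsNotShorter {a : Q.A} {rest p : List Q.A} (hrest : rest ≠ [])
    (h : Q.IsPath (a :: rest)) (hp : p ∈ parallelPathsNotShorter rest) :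
    a :: p ∈ parallelPathsNotShorter (a :: rest) := by
  obtain ⟨hpath, hsrc, htgt, hlen⟩ := hp
  have hlink := ((isPath_cons hrest).mp h).2
  refine ⟨(isPath_cons hpath.1).mpr ⟨hpath, hlink.trans hsrc.symm⟩, rfl, ?_,
    by simpa using hlen⟩
  rw [tgt_cons a hpath.1, htgt, tgt_cons a hrest]

lemma append_mem_parallelPathsNotShorter {a : Q.A} {rest v : List Q.A} (hrest : rest ≠ [])
    (h : Q.IsPath (a :: rest)) (hv : Q.IsBypass a v) :
    v ++ rest ∈ parallelPathsNotShorter (a :: rest) := by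
  obtain ⟨hpath, hsrc, htgt, -⟩ := hv
  obtain ⟨hrest_path, hlink⟩ := (isPath_cons hrest).mp h
  refine ⟨(isPath_append hpath.1 hrest).mpr ⟨hpath, hrest_path, htgt.trans hlink⟩,
    (src_append _ hpath.1).trans hsrc, by rw [tgt_append _ hrest, tgt_cons a hrest], ?_⟩
  simpa using List.length_pos_iff.mpr hpath.1

lemma Wa_add_ncard_le_ncard_parallelPathsNotShorter_cons [Finite Q.A] (hnc : Q.NoCycle)
    {a : Q.A} {rest : List Q.A} (hrest : rest ≠ []) (h : Q.IsPath (a :: rest)) :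
    Q.Wa a + (parallelPathsNotShorter rest).ncard ≤
      (parallelPathsNotShorter (a :: rest)).ncard := by
  have hdisj : Disjoint ((· ++ rest) '' {v | Q.IsBypass a v})
      ((a :: ·) '' parallelPathsNotShorter rest) := by
    refine Set.disjoint_left.mpr ?_
    rintro _ ⟨v, hv, rfl⟩ ⟨p, -, hp⟩
    obtain ⟨c, w, rfl⟩ := List.exists_cons_of_ne_nil hv.1.1
    obtain ⟨rfl, -⟩ := List.cons_eq_cons.mp hp
    exact not_isBypass_cons_self hnc _ w hv
  have hsub : (· ++ rest) '' {v | Q.IsBypass a v} ∪ (a :: ·) '' parallelPathsNotShorter rest ⊆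
      parallelPathsNotShorter (a :: rest) := by
    rintro _ (⟨v, hv, rfl⟩ | ⟨p, hp, rfl⟩)
    · exact append_mem_parallelPathsNotShorter hrest h hv
    · exact cons_mem_parallelPathsNotShorter hrest h hp
  calc Q.Wa a + (parallelPathsNotShorter rest).ncard
      = ((· ++ rest) '' {v | Q.IsBypass a v} ∪
          (a :: ·) '' parallelPathsNotShorter rest).ncard := by
        rw [Set.ncard_union_eq hdisj ((finite_setOf_isBypass hnc a).image _)
            ((finite_parallelPathsNotShorter hnc rest).image _),
          Set.ncard_image_of_injective _ (List.append_left_injective rest),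
          Set.ncard_image_of_injective _ List.cons_injective, Wa_eq_ncard]
    _ ≤ _ := Set.ncard_le_ncard hsub (finite_parallelPathsNotShorter hnc _)

lemma Wp_lt_ncard_parallelPathsNotShorter [Finite Q.A] (hnc : Q.NoCycle) {u : List Q.A}
    (hu : Q.IsPath u) : Q.Wp u < (parallelPathsNotShorter u).ncard := by
  induction u with
  | nil => exact absurd rfl hu.1
  | cons a rest ih =>
    rcases eq_or_ne rest [] with rfl | hrest
    · simpa [Quiv.Wp] using Wa_lt_ncard_parallelPathsNotShorter_singleton hnc a
    calc Q.Wp (a :: rest) = Q.Wa a + Q.Wp rest := by simp [Quiv.Wp]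
      _ < Q.Wa a + (parallelPathsNotShorter rest).ncard := by
        gcongr
        exact ih ((isPath_cons hrest).mp hu).1
      _ ≤ _ := Wa_add_ncard_le_ncard_parallelPathsNotShorter_cons hnc hrest hu

lemma parallelPathsNotShorter_subset_setOf_isBypass (hnm : Q.NoMultipleArrows) {α : Q.A}
    {u : List Q.A} (h : Q.IsBypass α u) :
    parallelPathsNotShorter u ⊆ {v | Q.IsBypass α v} := by
  rintro p ⟨hp, hsrc, htgt, hlen⟩
  refine ⟨hp, hsrc.trans h.2.1, htgt.trans h.2.2.1, ?_⟩
  rintro rfl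
  have := h.two_le_length hnm
  simp only [List.length_singleton] at hlen
  omega

end Counting

theorem stmt_5_general (Q : Quiv) [Fintype Q.A]
    (hnc : Q.NoCycle) (hnm : Q.NoMultipleArrows)
    (α : Q.A) (u : List Q.A) (h : Q.IsBypass α u) :
    Q.Wp u < Q.Wa α :=
  (Wp_lt_ncard_parallelPathsNotShorter hnc h.1).trans_le <| by
    rw [Wa_eq_ncard]
    exact Set.ncard_le_ncard (parallelPathsNotShorter_subset_setOf_isBypass hnm h)
      (finite_setOf_isBypass hnc α)

/-- For any bypass `(α,u)` in `Q`, one has `W(u) < W(α)`. -/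
theorem stmt_5 (Q : Quiv) [Fintype Q.V] [Fintype Q.A]
    (hnc : Q.NoCycle) (hnm : Q.NoMultipleArrows)
    (α : Q.A) (u : List Q.A) (h : Q.IsBypass α u) :
    Q.Wp u < Q.Wa α :=
  stmt_5_general Q hnc hnm α u h

end Quiv
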